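/- Let H = Quaternion ℤ be the ring of integer quaternions, and consider the free left H-module H³. Let r₁ = (−3, 1−2i−2k, 0), r₂ = (−1+i+k, 0, −1+i+k), r₃ = (−4i, 3, −3) be the Kishino relation vectors in H³. Then the left submodule Submodule.span H {r₁, r₂, r₃} is a proper submodule of H³ (it is not the whole module); that is, the quaternionic representation of the biquandle of the Kishino knot is a non-trivial module. -/

import Mathlib

open scoped Quaternion

namespace KishinoInt

/-- The quaternion unit `i` in `ℍ[ℤ]`. -/
def qI : ℍ[ℤ] := ⟨0, 1, 0, 0⟩

/-- The quaternion unit `j` in `ℍ[ℤ]`. -/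
def qJ : ℍ[ℤ] := ⟨0, 0, 1, 0⟩

/-- The quaternion unit `k` in `ℍ[ℤ]`. -/
def qK : ℍ[ℤ] := ⟨0, 0, 0, 1⟩

/-- First Kishino relation vector `r₁ = (−3, 1−2i−2k, 0)`. -/
def r₁ : Fin 3 → ℍ[ℤ] := ![(-3 : ℍ[ℤ]), 1 - 2 * qI - 2 * qK, 0]

/-- Second Kishino relation vector `r₂ = (−1+i+k, 0, −1+i+k)`. -/
def r₂ : Fin 3 → ℍ[ℤ] := ![-1 + qI + qK, 0, -1 + qI + qK]

/-- Third Kishino relation vector `r₃ = (−4i, 3, −3)`. -/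
def r₃ : Fin 3 → ℍ[ℤ] := ![-4 * qI, (3 : ℍ[ℤ]), -3]

/-- A quaternion over `ZMod 3` from its four components. -/
def qmk (a b c d : ZMod 3) : ℍ[ZMod 3] := ⟨a, b, c, d⟩

@[simp] theorem qmk_re (a b c d : ZMod 3) : (qmk a b c d).re = a := rfl
@[simp] theorem qmk_imI (a b c d : ZMod 3) : (qmk a b c d).imI = b := rfl
@[simp] theorem qmk_imJ (a b c d : ZMod 3) : (qmk a b c d).imJ = c := rfl
@[simp] theorem qmk_imK (a b c d : ZMod 3) : (qmk a b c d).imK = d := rfl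
@[simp] theorem qI_re : qI.re = 0 := rfl
@[simp] theorem qI_imI : qI.imI = 1 := rfl
@[simp] theorem qI_imJ : qI.imJ = 0 := rfl
@[simp] theorem qI_imK : qI.imK = 0 := rfl
@[simp] theorem qK_re : qK.re = 0 := rfl
@[simp] theorem qK_imI : qK.imI = 0 := rfl
@[simp] theorem qK_imJ : qK.imJ = 0 := rfl
@[simp] theorem qK_imK : qK.imK = 1 := rfl

/-- Componentwise reduction mod 3, as a ring homomorphism `ℍ[ℤ] →+* ℍ[ZMod 3]`. -/
def φ : ℍ[ℤ] →+* ℍ[ZMod 3] where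
  toFun q := qmk (q.re : ZMod 3) (q.imI : ZMod 3) (q.imJ : ZMod 3) (q.imK : ZMod 3)
  map_one' := by ext <;> simp
  map_mul' a b := by
    ext <;> simp [Quaternion.re_mul, Quaternion.imI_mul, Quaternion.imJ_mul,
      Quaternion.imK_mul]
  map_zero' := by ext <;> simp
  map_add' a b := by ext <;> push_cast <;> simp

/-- A left `ℍ[ℤ]`-linear functional vanishing on the Kishino relation vectors. -/
def f (v : Fin 3 → ℍ[ℤ]) : ℍ[ZMod 3] :=
  φ (v 1) * qmk 1 (-1) 0 (-1) + φ (v 2) * qmk (-1) (-1) 0 (-1)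

/-- The kernel of `f`, as a left submodule of `ℍ[ℤ]³`. -/
def S : Submodule ℍ[ℤ] (Fin 3 → ℍ[ℤ]) where
  carrier := {v | f v = 0}
  add_mem' {a b} ha hb := by
    simp only [Set.mem_setOf_eq, f] at *
    simp only [Pi.add_apply, map_add, add_mul]
    rw [add_add_add_comm, ha, hb, add_zero]
  zero_mem' := by simp [f]
  smul_mem' c v hv := by
    simp only [Set.mem_setOf_eq, f] at *
    simp only [Pi.smul_apply, smul_eq_mul, map_mul, mul_assoc, ← mul_add, hv, mul_zero]

/-- The integral quaternionic representation of the biquandle of the Kishino knot is a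
non-trivial module: the span of the Kishino relation vectors is a proper submodule
of `ℍ[ℤ]³`. -/
theorem kishino_quaternionic_module_nontrivial :
    Submodule.span ℍ[ℤ] ({r₁, r₂, r₃} : Set (Fin 3 → ℍ[ℤ])) ≠ ⊤ := by
  intro h
  have hle : Submodule.span ℍ[ℤ] ({r₁, r₂, r₃} : Set (Fin 3 → ℍ[ℤ])) ≤ S := by
    rw [Submodule.span_le]
    rintro v (rfl | rfl | rfl) <;>
      · show f _ = 0
        simp only [f, r₁, r₂, r₃]
        ext <;> simp [φ, Quaternion.re_mul, Quaternion.imI_mul, Quaternion.imJ_mul,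
          Quaternion.imK_mul] <;> decide
  have hmem : (![0, 0, 1] : Fin 3 → ℍ[ℤ]) ∈ S := hle (h ▸ Submodule.mem_top)
  have : f ![0, 0, 1] = 0 := hmem
  simp only [f] at this
  rw [show (![0,0,1] : Fin 3 → ℍ[ℤ]) 1 = 0 from rfl,
      show (![0,0,1] : Fin 3 → ℍ[ℤ]) 2 = 1 from rfl] at this
  have hre := congrArg QuaternionAlgebra.re this
  simp [Quaternion.re_mul] at hre

end KishinoInt
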